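/- Under the stated setup, s_diff = s(u_1, μ_𝒰) − s(u_out, μ_𝒰) satisfies E[s_diff] = d·σ²/k and Var(s_diff) = d·((2(k−1)+κ)σ⁴ + 2kγμσ³ + 2k²σ²μ²)/k². -/

import Mathlib

open MeasureTheory ProbabilityTheory Filter
open scoped ENNReal

section Helpers

lemma my_iIndepFun_ae_eq {Ω ι : Type*} [MeasurableSpace Ω] {μ : Measure Ω}
    {f g : ι → Ω → ℝ} (hf : iIndepFun f μ)
    (hfg : ∀ i, f i =ᵐ[μ] g i) : iIndepFun g μ := by
  rw [iIndepFun_iff_measure_inter_preimage_eq_mul] at hf ⊢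
  intro S sets hsets
  have hae : ∀ᵐ ω ∂μ, ∀ i ∈ S, f i ω = g i ω :=
    (eventually_all_finset S).2 fun i _ => hfg i
  have h1 : μ (⋂ i ∈ S, g i ⁻¹' sets i) = μ (⋂ i ∈ S, f i ⁻¹' sets i) := by
    apply measure_congr
    rw [Filter.eventuallyEq_set]
    filter_upwards [hae] with ω hω
    simp only [Set.mem_iInter, Set.mem_preimage]
    exact forall₂_congr fun i hi => by rw [hω i hi]
  have h2 : ∀ i ∈ S, μ (g i ⁻¹' sets i) = μ (f i ⁻¹' sets i) := by
    intro i hi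
    apply measure_congr
    rw [Filter.eventuallyEq_set]
    filter_upwards [hfg i] with ω hω
    simp [Set.mem_preimage, hω]
  rw [h1, hf S hsets]
  exact (Finset.prod_congr rfl h2).symm

lemma my_variance_congr {Ω : Type*} [MeasurableSpace Ω] {μ : Measure Ω}
    {X Y : Ω → ℝ} (h : X =ᵐ[μ] Y) : variance X μ = variance Y μ := by
  have hint : (∫ ω, X ω ∂μ) = ∫ ω, Y ω ∂μ := integral_congr_ae h
  unfold ProbabilityTheory.variance ProbabilityTheory.evariance
  congr 1
  apply lintegral_congr_ae
  filter_upwards [h] with ω hω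
  rw [hω, hint]

lemma my_indep31 {Ω ι : Type*} [MeasurableSpace Ω] {μ : Measure Ω}
    {C : ι → Ω → ℝ} (h : iIndepFun C μ)
    (hm : ∀ i, Measurable (C i)) {x y z w : ι}
    (hxw : x ≠ w) (hyw : y ≠ w) (hzw : z ≠ w)
    (φ : ℝ → ℝ → ℝ → ℝ) (hφ : Measurable fun p : ℝ × ℝ × ℝ => φ p.1 p.2.1 p.2.2)
    (ψ : ℝ → ℝ) (hψ : Measurable ψ) :
    IndepFun (fun ω => φ (C x ω) (C y ω) (C z ω)) (fun ω => ψ (C w ω)) μ := by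
  classical
  have hd : Disjoint ({x, y, z} : Finset ι) {w} := by
    simp only [Finset.disjoint_singleton_right, Finset.mem_insert, Finset.mem_singleton]
    push_neg
    exact ⟨Ne.symm hxw, Ne.symm hyw, Ne.symm hzw⟩
  have h1 := h.indepFun_finset {x, y, z} {w} hd hm
  have hx : x ∈ ({x, y, z} : Finset ι) := by simp
  have hy : y ∈ ({x, y, z} : Finset ι) := by simp
  have hz : z ∈ ({x, y, z} : Finset ι) := by simp
  have hw : w ∈ ({w} : Finset ι) := by simp
  have hΦ : Measurable (fun v : (∀ _ : ({x, y, z} : Finset ι), ℝ) =>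
      φ (v ⟨x, hx⟩) (v ⟨y, hy⟩) (v ⟨z, hz⟩)) := by
    have := hφ.comp (f := fun v : (∀ _ : ({x, y, z} : Finset ι), ℝ) =>
        ((v ⟨x, hx⟩, v ⟨y, hy⟩, v ⟨z, hz⟩) : ℝ × ℝ × ℝ))
      ((measurable_pi_apply _).prodMk ((measurable_pi_apply _).prodMk (measurable_pi_apply _)))
    exact this
  have hΨ : Measurable (fun v : (∀ _ : ({w} : Finset ι), ℝ) => ψ (v ⟨w, hw⟩)) := by
    have := hψ.comp (f := fun v : (∀ _ : ({w} : Finset ι), ℝ) => v ⟨w, hw⟩)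
      (measurable_pi_apply _)
    exact this
  exact h1.comp hΦ hΨ

lemma my_memLp_mul {Ω : Type*} [MeasurableSpace Ω] {μ : Measure Ω} {X Y : Ω → ℝ}
    {p q r : ℝ≥0∞} (hX : MemLp X q μ) (hY : MemLp Y r μ) (hpqr : 1/p = 1/q + 1/r) :
    MemLp (fun ω => X ω * Y ω) p μ := by
  haveI : ENNReal.HolderTriple q r p := ⟨by simpa only [one_div] using hpqr.symm⟩
  exact hY.smul hX

lemma my_L42 {Ω : Type*} [MeasurableSpace Ω] {μ : Measure Ω} {X Y : Ω → ℝ}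
    (hX : MemLp X 4 μ) (hY : MemLp Y 4 μ) : MemLp (fun ω => X ω * Y ω) 2 μ :=
  my_memLp_mul hX hY (by rw [ENNReal.div_add_div_same, ENNReal.div_eq_div_iff] <;> norm_num)

lemma my_L21 {Ω : Type*} [MeasurableSpace Ω] {μ : Measure Ω} [IsFiniteMeasure μ] {X Y : Ω → ℝ}
    (hX : MemLp X 2 μ) (hY : MemLp Y 2 μ) : Integrable (fun ω => X ω * Y ω) μ :=
  (my_memLp_mul hX hY
    (by rw [ENNReal.div_add_div_same, ENNReal.div_eq_div_iff] <;> norm_num)).integrable le_rfl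

end Helpers

/-- The family of all `d(k+1)` coordinate random variables of the in-set
vectors `u_1, …, u_k` and of the out-of-set vector `u_out`. -/
def allCoords {Ω : Type*} {d k : ℕ} (u : Fin k → Fin d → Ω → ℝ)
    (uout : Fin d → Ω → ℝ) : (Fin k × Fin d) ⊕ Fin d → Ω → ℝ :=
  Sum.elim (fun p => u p.1 p.2) uout

set_option maxHeartbeats 1600000 in
/-- `s_diff = s(u_1, μ_𝒰) − s(u_out, μ_𝒰)` satisfies
`E[s_diff] = d·σ²/k` and
`Var(s_diff) = d·((2(k−1)+κ)σ⁴ + 2kγμσ³ + 2k²σ²μ²)/k²`. -/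
theorem mean_and_variance_of_s_diff
    {Ω : Type*} [MeasureSpace Ω] [IsProbabilityMeasure (ℙ : Measure Ω)]
    (d k : ℕ) (hd : 1 ≤ d) (hk : 2 ≤ k)
    (u : Fin k → Fin d → Ω → ℝ) (uout : Fin d → Ω → ℝ) (μ σ γ κ : ℝ)
    (h_indep : iIndepFun (allCoords u uout) ℙ)
    (h_ident : ∀ i j, IdentDistrib (allCoords u uout i) (allCoords u uout j) ℙ ℙ)
    (h_L4 : ∀ i, MemLp (allCoords u uout i) 4 ℙ)
    (h_mean : ∀ i, ∫ ω, allCoords u uout i ω ∂ℙ = μ)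
    (h_var : ∀ i, variance (allCoords u uout i) ℙ = σ ^ 2)
    (h_third : ∀ i, ∫ ω, (allCoords u uout i ω - μ) ^ 3 ∂ℙ = γ * σ ^ 3)
    (h_fourth : ∀ i, ∫ ω, (allCoords u uout i ω - μ) ^ 4 ∂ℙ = κ * σ ^ 4) :
    (∫ ω, ((∑ l, u ⟨0, by omega⟩ l ω * ((1 / (k : ℝ)) * ∑ j, u j l ω))
        - ∑ l, uout l ω * ((1 / (k : ℝ)) * ∑ j, u j l ω)) ∂ℙ = d * σ ^ 2 / k) ∧
    variance (fun ω => (∑ l, u ⟨0, by omega⟩ l ω * ((1 / (k : ℝ)) * ∑ j, u j l ω))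
        - ∑ l, uout l ω * ((1 / (k : ℝ)) * ∑ j, u j l ω)) ℙ
      = d * ((2 * (k - 1) + κ) * σ ^ 4 + 2 * k * γ * μ * σ ^ 3
          + 2 * k ^ 2 * σ ^ 2 * μ ^ 2) / k ^ 2 := by
  classical
  have hk0 : (k : ℝ) ≠ 0 := Nat.cast_ne_zero.mpr (by omega)
  -- measurable modification
  let g : (Fin k × Fin d) ⊕ Fin d → Ω → ℝ := fun i => (h_L4 i).1.mk (allCoords u uout i)
  have hgmeas : ∀ i, Measurable (g i) := fun i => (h_L4 i).1.stronglyMeasurable_mk.measurable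
  have hge : ∀ i, allCoords u uout i =ᵐ[ℙ] g i := fun i => (h_L4 i).1.ae_eq_mk
  have hgL4 : ∀ i, MemLp (g i) 4 ℙ := fun i => MemLp.ae_eq (hge i) (h_L4 i)
  -- centered variables
  let C : (Fin k × Fin d) ⊕ Fin d → Ω → ℝ := fun i ω => g i ω - μ
  have hCmeas : ∀ i, Measurable (C i) := fun i => (hgmeas i).sub measurable_const
  have hCL4 : ∀ i, MemLp (C i) 4 ℙ := fun i => (hgL4 i).sub (memLp_const μ)
  have hCL2 : ∀ i, MemLp (C i) 2 ℙ := fun i => (hCL4 i).mono_exponent (by norm_num)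
  have hCint : ∀ i, Integrable (C i) ℙ := fun i => (hCL2 i).integrable one_le_two
  have hCindep : iIndepFun C ℙ :=
    (my_iIndepFun_ae_eq h_indep hge).comp (fun _ x => x - μ)
      (fun _ => measurable_id.sub measurable_const)
  -- moments of centered variables
  have hCae : ∀ i, (fun ω => allCoords u uout i ω - μ) =ᵐ[ℙ] C i :=
    fun i => (hge i).mono fun ω h => by simp only [C]; rw [h]
  have hmean0 : ∀ i, ∫ ω, C i ω ∂ℙ = 0 := by
    intro i
    have hgi : Integrable (g i) ℙ :=
      ((hgL4 i).mono_exponent (by norm_num : (1:ℝ≥0∞) ≤ 4)).integrable le_rfl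
    have hgmean : ∫ ω, g i ω ∂ℙ = μ := by
      rw [← integral_congr_ae (hge i)]; exact h_mean i
    simp only [C]
    rw [integral_sub hgi (integrable_const μ), hgmean, integral_const]
    simp
  have hmom2 : ∀ i, ∫ ω, C i ω ^ 2 ∂ℙ = σ ^ 2 := by
    intro i
    have hf2 : MemLp (allCoords u uout i) 2 ℙ := (h_L4 i).mono_exponent (by norm_num)
    have h2 : σ ^ 2 = ∫ ω, (allCoords u uout i ω - μ) ^ 2 ∂ℙ := by
      rw [← h_var i, variance_eq_integral hf2.aemeasurable, h_mean i]
    rw [h2]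
    exact integral_congr_ae ((hCae i).mono fun ω h => by dsimp only at h ⊢; rw [h])
  have hmom3 : ∀ i, ∫ ω, C i ω ^ 3 ∂ℙ = γ * σ ^ 3 := by
    intro i
    rw [← h_third i]
    exact integral_congr_ae ((hCae i).mono fun ω h => by dsimp only at h ⊢; rw [h])
  have hmom4 : ∀ i, ∫ ω, C i ω ^ 4 ∂ℙ = κ * σ ^ 4 := by
    intro i
    rw [← h_fourth i]
    exact integral_congr_ae ((hCae i).mono fun ω h => by dsimp only at h ⊢; rw [h])
  have hmom2' : ∀ i, ∫ ω, C i ω * C i ω ∂ℙ = σ ^ 2 := by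
    intro i
    rw [show (fun ω => C i ω * C i ω) = fun ω => C i ω ^ 2 from funext fun ω => by ring]
    exact hmom2 i
  -- L^p facts for squares
  have hCsq2 : ∀ i, MemLp (fun ω => C i ω ^ 2) 2 ℙ := by
    intro i
    have h := my_L42 (hCL4 i) (hCL4 i)
    rwa [show (fun ω => C i ω * C i ω) = fun ω => C i ω ^ 2 from funext fun ω => by ring] at h
  have hCsqint : ∀ i, Integrable (fun ω => C i ω ^ 2) ℙ :=
    fun i => (hCsq2 i).integrable one_le_two
  have hCcubeint : ∀ i, Integrable (fun ω => C i ω ^ 3) ℙ := by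
    intro i
    have h := my_L21 (hCsq2 i) (hCL2 i)
    rwa [show (fun ω => C i ω ^ 2 * C i ω) = fun ω => C i ω ^ 3 from funext fun ω => by ring] at h
  have hC4int : ∀ i, Integrable (fun ω => C i ω ^ 4) ℙ := by
    intro i
    have h := my_L21 (hCsq2 i) (hCsq2 i)
    rwa [show (fun ω => C i ω ^ 2 * C i ω ^ 2) = fun ω => C i ω ^ 4 from funext fun ω => by ring]
      at h
  -- basic product expectations for distinct indices
  have hE11 : ∀ x y, x ≠ y → ∫ ω, C x ω * C y ω ∂ℙ = 0 := by
    intro x y hxy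
    have h := (hCindep.indepFun hxy).integral_fun_mul_eq_mul_integral (hCint x).aestronglyMeasurable (hCint y).aestronglyMeasurable
    calc ∫ ω, C x ω * C y ω ∂ℙ = (∫ ω, C x ω ∂ℙ) * ∫ ω, C y ω ∂ℙ := h
    _ = 0 := by rw [hmean0 x, zero_mul]
  have hE21 : ∀ x y, x ≠ y → ∫ ω, C x ω ^ 2 * C y ω ∂ℙ = 0 := by
    intro x y hxy
    have hind := my_indep31 hCindep hCmeas hxy hxy hxy (fun p _ _ => p ^ 2)
      (measurable_fst.pow_const 2) id measurable_id
    have h := hind.integral_fun_mul_eq_mul_integral (hCsqint x).aestronglyMeasurable (hCint y).aestronglyMeasurable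
    calc ∫ ω, C x ω ^ 2 * C y ω ∂ℙ = (∫ ω, C x ω ^ 2 ∂ℙ) * ∫ ω, C y ω ∂ℙ := h
    _ = 0 := by rw [hmean0 y, mul_zero]
  have hE31 : ∀ x y, x ≠ y → ∫ ω, C x ω ^ 3 * C y ω ∂ℙ = 0 := by
    intro x y hxy
    have hind := my_indep31 hCindep hCmeas hxy hxy hxy (fun p _ _ => p ^ 3)
      (measurable_fst.pow_const 3) id measurable_id
    have h := hind.integral_fun_mul_eq_mul_integral (hCcubeint x).aestronglyMeasurable (hCint y).aestronglyMeasurable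
    calc ∫ ω, C x ω ^ 3 * C y ω ∂ℙ = (∫ ω, C x ω ^ 3 ∂ℙ) * ∫ ω, C y ω ∂ℙ := h
    _ = 0 := by rw [hmean0 y, mul_zero]
  have hE22 : ∀ x y, x ≠ y → ∫ ω, C x ω ^ 2 * C y ω ^ 2 ∂ℙ = σ ^ 4 := by
    intro x y hxy
    have hind := my_indep31 hCindep hCmeas hxy hxy hxy (fun p _ _ => p ^ 2)
      (measurable_fst.pow_const 2) (fun q => q ^ 2) (measurable_id.pow_const 2)
    have h := hind.integral_fun_mul_eq_mul_integral (hCsqint x).aestronglyMeasurable (hCsqint y).aestronglyMeasurable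
    calc ∫ ω, C x ω ^ 2 * C y ω ^ 2 ∂ℙ = (∫ ω, C x ω ^ 2 ∂ℙ) * ∫ ω, C y ω ^ 2 ∂ℙ := h
    _ = σ ^ 4 := by rw [hmom2 x, hmom2 y]; ring
  -- the per-coordinate summands
  let j0 : Fin k := ⟨0, by omega⟩
  let T : Fin d → Ω → ℝ := fun l ω =>
    (g (Sum.inl (j0, l)) ω - g (Sum.inr l) ω) * ((1 / (k:ℝ)) * ∑ j, g (Sum.inl (j, l)) ω)
  let N : Fin d → Ω → ℝ := fun l ω =>
    (C (Sum.inl (j0, l)) ω - C (Sum.inr l) ω) * ((∑ j, C (Sum.inl (j, l)) ω) + (k:ℝ) * μ)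
  have hsum : ∀ (l : Fin d) (ω : Ω),
      ∑ j, g (Sum.inl (j, l)) ω = (∑ j, C (Sum.inl (j, l)) ω) + (k:ℝ) * μ := by
    intro l ω
    have h1 : ∀ j : Fin k, g (Sum.inl (j, l)) ω = C (Sum.inl (j, l)) ω + μ := fun j => by
      simp only [C]; ring
    rw [Finset.sum_congr rfl fun j _ => h1 j, Finset.sum_add_distrib, Finset.sum_const,
      Finset.card_univ, Fintype.card_fin, nsmul_eq_mul]
  have hTN : ∀ l, T l = fun ω => (1 / (k:ℝ)) * N l ω := by
    intro l; funext ω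
    simp only [T, N]
    rw [hsum l ω]
    have h0 : g (Sum.inl (j0, l)) ω = C (Sum.inl (j0, l)) ω + μ := by simp only [C]; ring
    have hb : g (Sum.inr l) ω = C (Sum.inr l) ω + μ := by simp only [C]; ring
    rw [h0, hb]; ring
  -- the main per-coordinate computation
  have key : ∀ l : Fin d, Integrable (T l) ℙ ∧ (∫ ω, T l ω ∂ℙ = σ ^ 2 / k) ∧
      MemLp (T l) 2 ℙ ∧ variance (T l) ℙ
        = ((2 * ((k:ℝ) - 1) + κ) * σ ^ 4 + 2 * k * γ * μ * σ ^ 3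
            + 2 * k ^ 2 * σ ^ 2 * μ ^ 2) / k ^ 2 := by
    intro l
    set x0 : (Fin k × Fin d) ⊕ Fin d := Sum.inl (j0, l) with hx0def
    set xb : (Fin k × Fin d) ⊕ Fin d := Sum.inr l with hxbdef
    have hne0b : x0 ≠ xb := by simp [hx0def, hxbdef]
    have hajb : ∀ j : Fin k, (Sum.inl (j, l) : (Fin k × Fin d) ⊕ Fin d) ≠ xb := fun j => by
      simp [hxbdef]
    have haj0 : ∀ j : Fin k, j ≠ j0 → (Sum.inl (j, l) : (Fin k × Fin d) ⊕ Fin d) ≠ x0 :=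
      fun j hj => by simp [hx0def, hj]
    have hinlne : ∀ j j' : Fin k, j ≠ j' →
        (Sum.inl (j, l) : (Fin k × Fin d) ⊕ Fin d) ≠ Sum.inl (j', l) := by
      intro j j' hne h
      exact hne (Prod.ext_iff.1 (Sum.inl.inj h)).1
    set P : Ω → ℝ := fun ω => C x0 ω - C xb ω with hPdef
    have hPL4 : MemLp P 4 ℙ := (hCL4 x0).sub (hCL4 xb)
    have hPL2 : MemLp P 2 ℙ := hPL4.mono_exponent (by norm_num)
    have hPint : Integrable P ℙ := hPL2.integrable one_le_two
    have hP2mem : MemLp (fun ω => P ω ^ 2) 2 ℙ := by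
      have h := my_L42 hPL4 hPL4
      rwa [show (fun ω => P ω * P ω) = fun ω => P ω ^ 2 from funext fun ω => by ring] at h
    have hP2int : Integrable (fun ω => P ω ^ 2) ℙ := hP2mem.integrable one_le_two
    have hPmean : ∫ ω, P ω ∂ℙ = 0 := by
      simp only [hPdef]
      rw [integral_sub (hCint x0) (hCint xb), hmean0 x0, hmean0 xb, sub_zero]
    have hF1 : ∫ ω, P ω ^ 2 ∂ℙ = 2 * σ ^ 2 := by
      have hPe : (fun ω => P ω ^ 2)
          = fun ω => C x0 ω ^ 2 - 2 * (C x0 ω * C xb ω) + C xb ω ^ 2 := by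
        funext ω; simp only [hPdef]; ring
      have hia : Integrable (fun ω => C x0 ω ^ 2 - 2 * (C x0 ω * C xb ω)) ℙ :=
        (hCsqint x0).sub ((my_L21 (hCL2 x0) (hCL2 xb)).const_mul 2)
      rw [hPe, integral_add hia (hCsqint xb),
        integral_sub (hCsqint x0) ((my_L21 (hCL2 x0) (hCL2 xb)).const_mul 2),
        integral_const_mul, hmom2 x0, hmom2 xb, hE11 x0 xb hne0b]
      ring
    have hF2 : ∫ ω, P ω ^ 2 * C x0 ω ∂ℙ = γ * σ ^ 3 := by
      have hPe : (fun ω => P ω ^ 2 * C x0 ω)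
          = fun ω => C x0 ω ^ 3 - 2 * (C x0 ω ^ 2 * C xb ω) + C xb ω ^ 2 * C x0 ω := by
        funext ω; simp only [hPdef]; ring
      have hi1 : Integrable (fun ω => C x0 ω ^ 2 * C xb ω) ℙ := my_L21 (hCsq2 x0) (hCL2 xb)
      have hi2 : Integrable (fun ω => C xb ω ^ 2 * C x0 ω) ℙ := my_L21 (hCsq2 xb) (hCL2 x0)
      have hia : Integrable (fun ω => C x0 ω ^ 3 - 2 * (C x0 ω ^ 2 * C xb ω)) ℙ :=
        (hCcubeint x0).sub (hi1.const_mul 2)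
      rw [hPe, integral_add hia hi2,
        integral_sub (hCcubeint x0) (hi1.const_mul 2), integral_const_mul,
        hmom3 x0, hE21 x0 xb hne0b, hE21 xb x0 (Ne.symm hne0b)]
      ring
    have hF3 : ∀ j : Fin k, j ≠ j0 → ∫ ω, P ω ^ 2 * C (Sum.inl (j, l)) ω ∂ℙ = 0 := by
      intro j hj
      have hind := my_indep31 hCindep hCmeas (Ne.symm (haj0 j hj)) (Ne.symm (hajb j))
        (Ne.symm (haj0 j hj)) (fun p q _ => (p - q) ^ 2)
        ((measurable_fst.sub (measurable_fst.comp measurable_snd)).pow_const 2)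
        id measurable_id
      have h := hind.integral_fun_mul_eq_mul_integral hP2int.aestronglyMeasurable (hCint _).aestronglyMeasurable
      calc ∫ ω, P ω ^ 2 * C (Sum.inl (j, l)) ω ∂ℙ
          = (∫ ω, P ω ^ 2 ∂ℙ) * ∫ ω, C (Sum.inl (j, l)) ω ∂ℙ := h
      _ = 0 := by rw [hmean0, mul_zero]
    have hPA0 : ∫ ω, P ω * C x0 ω ∂ℙ = σ ^ 2 := by
      have hPe : (fun ω => P ω * C x0 ω) = fun ω => C x0 ω ^ 2 - C xb ω * C x0 ω := by
        funext ω; simp only [hPdef]; ring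
      rw [hPe, integral_sub (hCsqint x0) (my_L21 (hCL2 xb) (hCL2 x0)), hmom2 x0,
        hE11 xb x0 (Ne.symm hne0b), sub_zero]
    have hPAj : ∀ j : Fin k, j ≠ j0 → ∫ ω, P ω * C (Sum.inl (j, l)) ω ∂ℙ = 0 := by
      intro j hj
      have hind := my_indep31 hCindep hCmeas (Ne.symm (haj0 j hj)) (Ne.symm (hajb j))
        (Ne.symm (haj0 j hj)) (fun p q _ => p - q)
        (measurable_fst.sub (measurable_fst.comp measurable_snd)) id measurable_id
      have h := hind.integral_fun_mul_eq_mul_integral hPint.aestronglyMeasurable (hCint _).aestronglyMeasurable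
      calc ∫ ω, P ω * C (Sum.inl (j, l)) ω ∂ℙ
          = (∫ ω, P ω ∂ℙ) * ∫ ω, C (Sum.inl (j, l)) ω ∂ℙ := h
      _ = 0 := by rw [hmean0, mul_zero]
    have hNeq : N l = fun ω => (∑ j, P ω * C (Sum.inl (j, l)) ω) + ((k:ℝ) * μ) * P ω := by
      funext ω
      show P ω * ((∑ j, C (Sum.inl (j, l)) ω) + (k:ℝ) * μ) = _
      rw [mul_add, Finset.mul_sum, mul_comm (P ω) ((k:ℝ) * μ)]
    have hNterms : ∀ j : Fin k, Integrable (fun ω => P ω * C (Sum.inl (j, l)) ω) ℙ :=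
      fun j => my_L21 hPL2 (hCL2 _)
    have hEN : ∫ ω, N l ω ∂ℙ = σ ^ 2 := by
      simp only [hNeq]
      rw [integral_add (integrable_finset_sum _ fun j _ => hNterms j) (hPint.const_mul _),
        integral_finset_sum _ fun j _ => hNterms j, integral_const_mul, hPmean, mul_zero,
        add_zero]
      have hite : ∀ j ∈ Finset.univ, ∫ ω, P ω * C (Sum.inl (j, l)) ω ∂ℙ
          = if j = j0 then σ ^ 2 else 0 := by
        intro j _
        by_cases hj : j = j0
        · subst hj; rw [if_pos rfl]; exact hPA0
        · rw [if_neg hj]; exact hPAj j hj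
      rw [Finset.sum_congr rfl hite, Finset.sum_ite_eq' Finset.univ j0 fun _ => σ ^ 2,
        if_pos (Finset.mem_univ _)]
    have hval : ∀ j j' : Fin k,
        ∫ ω, P ω ^ 2 * (C (Sum.inl (j, l)) ω * C (Sum.inl (j', l)) ω) ∂ℙ
        = if j' = j then (if j = j0 then κ * σ ^ 4 + σ ^ 4 else 2 * σ ^ 4) else 0 := by
      intro j j'
      by_cases hjj : j' = j
      · subst hjj
        rw [if_pos rfl]
        by_cases hj : j' = j0
        · subst hj
          rw [if_pos rfl]
          have hPe : (fun ω => P ω ^ 2 * (C (Sum.inl (j0, l)) ω * C (Sum.inl (j0, l)) ω))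
              = fun ω => C x0 ω ^ 4 - 2 * (C x0 ω ^ 3 * C xb ω) + C x0 ω ^ 2 * C xb ω ^ 2 := by
            funext ω; simp only [hPdef, hx0def]; ring
          have hind3 := my_indep31 hCindep hCmeas hne0b hne0b hne0b (fun p _ _ => p ^ 3)
            (measurable_fst.pow_const 3) id measurable_id
          have hi1 : Integrable (fun ω => C x0 ω ^ 3 * C xb ω) ℙ :=
            hind3.integrable_mul (hCcubeint x0) (hCint xb)
          have hi2 : Integrable (fun ω => C x0 ω ^ 2 * C xb ω ^ 2) ℙ :=
            my_L21 (hCsq2 x0) (hCsq2 xb)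
          have hia : Integrable (fun ω => C x0 ω ^ 4 - 2 * (C x0 ω ^ 3 * C xb ω)) ℙ :=
            (hC4int x0).sub (hi1.const_mul 2)
          rw [hPe, integral_add hia hi2,
            integral_sub (hC4int x0) (hi1.const_mul 2), integral_const_mul, hmom4 x0,
            hE31 x0 xb hne0b, hE22 x0 xb hne0b]
          ring
        · rw [if_neg hj]
          have hind := my_indep31 hCindep hCmeas (Ne.symm (haj0 j' hj)) (Ne.symm (hajb j'))
            (Ne.symm (haj0 j' hj)) (fun p q _ => (p - q) ^ 2)
            ((measurable_fst.sub (measurable_fst.comp measurable_snd)).pow_const 2)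
            (fun t => t * t) (measurable_id.mul measurable_id)
          have h := hind.integral_fun_mul_eq_mul_integral hP2int.aestronglyMeasurable (my_L21 (hCL2 _) (hCL2 _)).aestronglyMeasurable
          calc ∫ ω, P ω ^ 2 * (C (Sum.inl (j', l)) ω * C (Sum.inl (j', l)) ω) ∂ℙ
              = (∫ ω, P ω ^ 2 ∂ℙ) * ∫ ω, C (Sum.inl (j', l)) ω * C (Sum.inl (j', l)) ω ∂ℙ := h
          _ = 2 * σ ^ 4 := by rw [hF1, hmom2']; ring
      · rw [if_neg hjj]
        by_cases hj' : j' = j0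
        · subst hj'
          have hjne : j ≠ j0 := fun h => hjj h.symm
          have hPe : (fun ω => P ω ^ 2 * (C (Sum.inl (j, l)) ω * C (Sum.inl (j0, l)) ω))
              = fun ω => (P ω ^ 2 * C x0 ω) * C (Sum.inl (j, l)) ω := by
            funext ω; simp only [hx0def]; ring
          have hind := my_indep31 hCindep hCmeas (Ne.symm (haj0 j hjne)) (Ne.symm (hajb j))
            (Ne.symm (haj0 j hjne)) (fun p q _ => (p - q) ^ 2 * p)
            (((measurable_fst.sub (measurable_fst.comp measurable_snd)).pow_const 2).mul
              measurable_fst) id measurable_id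
          have hint : Integrable (fun ω => P ω ^ 2 * C x0 ω) ℙ := my_L21 hP2mem (hCL2 x0)
          have h := hind.integral_fun_mul_eq_mul_integral hint.aestronglyMeasurable (hCint _).aestronglyMeasurable
          rw [hPe]
          calc ∫ ω, (P ω ^ 2 * C x0 ω) * C (Sum.inl (j, l)) ω ∂ℙ
              = (∫ ω, P ω ^ 2 * C x0 ω ∂ℙ) * ∫ ω, C (Sum.inl (j, l)) ω ∂ℙ := h
          _ = 0 := by rw [hmean0, mul_zero]
        · have hPe : (fun ω => P ω ^ 2 * (C (Sum.inl (j, l)) ω * C (Sum.inl (j', l)) ω))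
              = fun ω => (P ω ^ 2 * C (Sum.inl (j, l)) ω) * C (Sum.inl (j', l)) ω := by
            funext ω; ring
          have hind := my_indep31 hCindep hCmeas (Ne.symm (haj0 j' hj')) (Ne.symm (hajb j'))
            (hinlne j j' fun h => hjj h.symm) (fun p q r => (p - q) ^ 2 * r)
            (((measurable_fst.sub (measurable_fst.comp measurable_snd)).pow_const 2).mul
              (measurable_snd.comp measurable_snd)) id measurable_id
          have hint : Integrable (fun ω => P ω ^ 2 * C (Sum.inl (j, l)) ω) ℙ :=
            my_L21 hP2mem (hCL2 _)
          have h := hind.integral_fun_mul_eq_mul_integral hint.aestronglyMeasurable (hCint _).aestronglyMeasurable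
          rw [hPe]
          calc ∫ ω, (P ω ^ 2 * C (Sum.inl (j, l)) ω) * C (Sum.inl (j', l)) ω ∂ℙ
              = (∫ ω, P ω ^ 2 * C (Sum.inl (j, l)) ω ∂ℙ) * ∫ ω, C (Sum.inl (j', l)) ω ∂ℙ := h
          _ = 0 := by rw [hmean0, mul_zero]
    have hNL2 : MemLp (N l) 2 ℙ := by
      have hs4 : MemLp (fun ω => (∑ j, C (Sum.inl (j, l)) ω) + (k:ℝ) * μ) 4 ℙ :=
        (memLp_finsetSum Finset.univ fun (j : Fin k) _ => hCL4 (Sum.inl (j, l))).add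
          (memLp_const _)
      have h := my_L42 hPL4 hs4
      exact h
    have hEN2 : ∫ ω, N l ω ^ 2 ∂ℙ
        = (κ * σ ^ 4 + σ ^ 4 + ((k:ℝ) - 1) * (2 * σ ^ 4))
          + (2 * ((k:ℝ) * μ) * (γ * σ ^ 3) + ((k:ℝ) * μ) ^ 2 * (2 * σ ^ 2)) := by
      have hN2eq : (fun ω => N l ω ^ 2) = fun ω =>
          (∑ j : Fin k, ∑ j' : Fin k,
            P ω ^ 2 * (C (Sum.inl (j, l)) ω * C (Sum.inl (j', l)) ω))
          + ((2 * ((k:ℝ) * μ)) * (∑ j : Fin k, P ω ^ 2 * C (Sum.inl (j, l)) ω)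
            + ((k:ℝ) * μ) ^ 2 * P ω ^ 2) := by
        funext ω
        show (P ω * ((∑ j, C (Sum.inl (j, l)) ω) + (k:ℝ) * μ)) ^ 2 = _
        simp only [← Finset.mul_sum, ← Finset.sum_mul]
        ring
      have hiPAA : ∀ j j' : Fin k, Integrable
          (fun ω => P ω ^ 2 * (C (Sum.inl (j, l)) ω * C (Sum.inl (j', l)) ω)) ℙ :=
        fun j j' => my_L21 hP2mem (my_L42 (hCL4 _) (hCL4 _))
      have hiP2A : ∀ j : Fin k, Integrable (fun ω => P ω ^ 2 * C (Sum.inl (j, l)) ω) ℙ :=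
        fun j => my_L21 hP2mem (hCL2 _)
      have hinner : ∀ j : Fin k,
          ∫ ω, ∑ j' : Fin k, P ω ^ 2 * (C (Sum.inl (j, l)) ω * C (Sum.inl (j', l)) ω) ∂ℙ
          = if j = j0 then κ * σ ^ 4 + σ ^ 4 else 2 * σ ^ 4 := by
        intro j
        rw [integral_finset_sum _ fun j' _ => hiPAA j j',
          Finset.sum_congr rfl fun j' _ => hval j j',
          Finset.sum_ite_eq' Finset.univ j
            (fun _ => if j = j0 then κ * σ ^ 4 + σ ^ 4 else 2 * σ ^ 4),
          if_pos (Finset.mem_univ _)]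
      have hmid : ∀ j ∈ Finset.univ, ∫ ω, P ω ^ 2 * C (Sum.inl (j, l)) ω ∂ℙ
          = if j = j0 then γ * σ ^ 3 else 0 := by
        intro j _
        by_cases hj : j = j0
        · subst hj; rw [if_pos rfl]; exact hF2
        · rw [if_neg hj]; exact hF3 j hj
      have houter : ∑ j : Fin k, (if j = j0 then κ * σ ^ 4 + σ ^ 4 else 2 * σ ^ 4)
          = κ * σ ^ 4 + σ ^ 4 + ((k:ℝ) - 1) * (2 * σ ^ 4) := by
        rw [← Finset.add_sum_erase _ _ (Finset.mem_univ j0), if_pos rfl,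
          Finset.sum_congr rfl fun j hj => if_neg (Finset.ne_of_mem_erase hj),
          Finset.sum_const, Finset.card_erase_of_mem (Finset.mem_univ _), Finset.card_univ,
          Fintype.card_fin, nsmul_eq_mul]
        have hc : ((k - 1 : ℕ) : ℝ) = (k:ℝ) - 1 := by
          rw [Nat.cast_sub (by omega : 1 ≤ k)]; norm_num
        rw [hc]
      have hib : Integrable (fun ω =>
          (2 * ((k:ℝ) * μ)) * (∑ j : Fin k, P ω ^ 2 * C (Sum.inl (j, l)) ω)
          + ((k:ℝ) * μ) ^ 2 * P ω ^ 2) ℙ :=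
        ((integrable_finset_sum _ fun j _ => hiP2A j).const_mul _).add
          (hP2int.const_mul _)
      rw [hN2eq, integral_add (integrable_finset_sum _ fun j _ =>
            integrable_finset_sum _ fun j' _ => hiPAA j j') hib,
        integral_finset_sum _ (fun j _ => integrable_finset_sum _ fun j' _ => hiPAA j j'),
        Finset.sum_congr rfl fun j _ => hinner j, houter,
        integral_add ((integrable_finset_sum _ fun j _ => hiP2A j).const_mul _)
          (hP2int.const_mul _),
        integral_const_mul, integral_finset_sum _ fun j _ => hiP2A j,
        Finset.sum_congr rfl hmid, Finset.sum_ite_eq' Finset.univ j0 fun _ => γ * σ ^ 3,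
        if_pos (Finset.mem_univ _), integral_const_mul, hF1]
    have hvarN : variance (N l) ℙ
        = (2 * ((k:ℝ) - 1) + κ) * σ ^ 4 + 2 * k * γ * μ * σ ^ 3
          + 2 * k ^ 2 * σ ^ 2 * μ ^ 2 := by
      rw [variance_eq_sub hNL2]
      have h1 : (∫ ω, (N l ^ 2) ω ∂ℙ) = ∫ ω, N l ω ^ 2 ∂ℙ := by
        apply integral_congr_ae
        filter_upwards with ω
        simp [Pi.pow_apply]
      rw [h1, hEN2, hEN]
      ring
    have hTmean : ∫ ω, T l ω ∂ℙ = σ ^ 2 / k := by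
      simp only [hTN]
      rw [integral_const_mul, hEN]
      ring
    have hTvar : variance (T l) ℙ
        = ((2 * ((k:ℝ) - 1) + κ) * σ ^ 4 + 2 * k * γ * μ * σ ^ 3
            + 2 * k ^ 2 * σ ^ 2 * μ ^ 2) / k ^ 2 := by
      rw [hTN l, variance_const_mul, hvarN]
      ring
    have hTL2 : MemLp (T l) 2 ℙ := by
      rw [hTN l]
      exact hNL2.const_mul _
    exact ⟨hTL2.integrable one_le_two, hTmean, hTL2, hTvar⟩
  -- pairwise independence of the coordinate summands
  have hTindep : ∀ l l' : Fin d, l ≠ l' → IndepFun (T l) (T l') ℙ := by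
    intro l l' hll
    have hgindep := my_iIndepFun_ae_eq h_indep hge
    set S : Fin d → Finset ((Fin k × Fin d) ⊕ Fin d) :=
      fun m => insert (Sum.inr m) (Finset.image (fun j : Fin k => Sum.inl (j, m)) Finset.univ)
      with hSdef
    have hmema : ∀ (m : Fin d) (j : Fin k), (Sum.inl (j, m) : (Fin k × Fin d) ⊕ Fin d) ∈ S m := by
      intro m j; simp [hSdef]
    have hmemb : ∀ m : Fin d, (Sum.inr m : (Fin k × Fin d) ⊕ Fin d) ∈ S m := by
      intro m; simp [hSdef]
    have hcoord : ∀ (m : Fin d) i, i ∈ S m →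
        Sum.elim (fun p : Fin k × Fin d => p.2) id i = m := by
      intro m i hi
      simp only [hSdef, Finset.mem_insert, Finset.mem_image, Finset.mem_univ, true_and] at hi
      rcases hi with rfl | ⟨j, rfl⟩ <;> simp
    have hdisj : Disjoint (S l) (S l') := Finset.disjoint_left.2 fun i hi hi' =>
      hll ((hcoord l i hi).symm.trans (hcoord l' i hi'))
    have h1 := hgindep.indepFun_finset (S l) (S l') hdisj hgmeas
    have hΦ : ∀ m : Fin d, Measurable (fun v : (∀ _ : (S m : Finset _), ℝ) =>
        (v ⟨Sum.inl (j0, m), hmema m j0⟩ - v ⟨Sum.inr m, hmemb m⟩)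
          * ((1 / (k:ℝ)) * ∑ j : Fin k, v ⟨Sum.inl (j, m), hmema m j⟩)) := by
      intro m
      apply Measurable.mul
      · exact (measurable_pi_apply _).sub (measurable_pi_apply _)
      · have hs : Measurable (fun v : (∀ _ : (S m : Finset _), ℝ) =>
            ∑ j : Fin k, v ⟨Sum.inl (j, m), hmema m j⟩) :=
          Finset.measurable_sum (f := fun (j : Fin k) (v : (∀ _ : (S m : Finset _), ℝ)) =>
            v ⟨Sum.inl (j, m), hmema m j⟩) Finset.univ (fun j _ => measurable_pi_apply _)
        exact hs.const_mul (1/(k:ℝ))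
    exact h1.comp (hΦ l) (hΦ l')
  -- identification of the target random variable
  have hall : ∀ᵐ ω ∂ℙ, ∀ i, allCoords u uout i ω = g i ω := ae_all_iff.2 hge
  have hae : (fun ω => (∑ l, u ⟨0, by omega⟩ l ω * ((1 / (k : ℝ)) * ∑ j, u j l ω))
      - ∑ l, uout l ω * ((1 / (k : ℝ)) * ∑ j, u j l ω)) =ᵐ[ℙ] fun ω => ∑ l, T l ω := by
    filter_upwards [hall] with ω hω
    rw [← Finset.sum_sub_distrib]
    refine Finset.sum_congr rfl fun l _ => ?_
    have h0 : u ⟨0, by omega⟩ l ω = g (Sum.inl (j0, l)) ω := hω (Sum.inl (j0, l))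
    have hb : uout l ω = g (Sum.inr l) ω := hω (Sum.inr l)
    have hj : ∀ j : Fin k, u j l ω = g (Sum.inl (j, l)) ω := fun j => hω (Sum.inl (j, l))
    rw [h0, hb, Finset.sum_congr rfl fun j _ => hj j]
    show _ = (g (Sum.inl (j0, l)) ω - g (Sum.inr l) ω)
      * ((1 / (k:ℝ)) * ∑ j, g (Sum.inl (j, l)) ω)
    ring
  constructor
  · rw [integral_congr_ae hae, integral_finset_sum _ fun l _ => (key l).1,
      Finset.sum_congr rfl fun l _ => (key l).2.1, Finset.sum_const, Finset.card_univ,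
      Fintype.card_fin, nsmul_eq_mul]
    ring
  · rw [my_variance_congr hae]
    have hfun : (fun ω => ∑ l, T l ω) = ∑ l, T l := by
      funext ω; rw [Finset.sum_apply]
    rw [hfun, IndepFun.variance_sum (fun l _ => (key l).2.2.1)
        (fun l _ l' hl' h => hTindep l l' h),
      Finset.sum_congr rfl fun l _ => (key l).2.2.2, Finset.sum_const, Finset.card_univ,
      Fintype.card_fin, nsmul_eq_mul]
    ring
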